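/- Let P₁, P₂ > 0 and define, for t in the open interval ((√P₁ - √P₂)², (√P₁ + √P₂)²), the function f(t) = ln((P₁+P₂)/(e·P₂)) + t/(P₁+P₂) + ln(1 - (t + P₁ - P₂)²/(4 P₁ t)). Then f(t) ≤ 0 for all such t, with equality exactly at t = P₁ + P₂. -/

import Mathlib

open Real

/-- The function arising in bounding the density of the sum of two independent uniform
distributions on spheres against a Gaussian density. -/
noncomputable def fMAC (P₁ P₂ t : ℝ) : ℝ :=
  Real.log ((P₁ + P₂) / (Real.exp 1 * P₂)) + t / (P₁ + P₂)
    + Real.log (1 - (t + P₁ - P₂) ^ 2 / (4 * P₁ * t))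

/-!
Merging the two logarithms writes `fMAC P₁ P₂ t = log g + t / (P₁ + P₂) - 1` for an explicit
ratio `g`, and an algebraic identity shows `g + t / (P₁ + P₂) ≤ 2`, with defect a square
vanishing at `t = P₁ + P₂`. Then `log g ≤ g - 1 ≤ 1 - t / (P₁ + P₂)`, and equality in
`log g ≤ g - 1` forces `g = 1`.
-/

lemma log_add_sub_one_nonpos {g x : ℝ} (hg : 0 < g) (h : g + x ≤ 2) : log g + x - 1 ≤ 0 := by
  linarith [log_le_sub_one_of_pos hg]

lemma eq_one_of_log_add_sub_one_eq_zero {g x : ℝ} (hg : 0 < g) (h : g + x ≤ 2)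
    (h₀ : log g + x - 1 = 0) : g = 1 ∧ x = 1 := by
  have hg₁ : g = 1 := by
    by_contra hg₁
    linarith [log_lt_sub_one_of_pos hg hg₁]
  refine ⟨hg₁, ?_⟩
  rw [hg₁, log_one] at h₀
  linarith

lemma four_mul_mul_sub_sq_eq {P₁ P₂ : ℝ} (hP₁ : 0 ≤ P₁) (hP₂ : 0 ≤ P₂) (t : ℝ) :
    4 * P₁ * t - (t + P₁ - P₂) ^ 2
      = ((√P₁ + √P₂) ^ 2 - t) * (t - (√P₁ - √P₂) ^ 2) := by
  have h₁ := sq_sqrt hP₁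
  have h₂ := sq_sqrt hP₂
  linear_combination (-2 * t + (P₁ - P₂ + √P₁ ^ 2 - √P₂ ^ 2)) * h₁
    + (-2 * t - (P₁ - P₂ + √P₁ ^ 2 - √P₂ ^ 2)) * h₂

lemma four_mul_mul_sub_sq_pos {P₁ P₂ t : ℝ} (hP₁ : 0 ≤ P₁) (hP₂ : 0 ≤ P₂)
    (ht : t ∈ Set.Ioo ((√P₁ - √P₂) ^ 2) ((√P₁ + √P₂) ^ 2)) :
    0 < 4 * P₁ * t - (t + P₁ - P₂) ^ 2 := by
  rw [four_mul_mul_sub_sq_eq hP₁ hP₂]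
  exact mul_pos (sub_pos.2 ht.2) (sub_pos.2 ht.1)

noncomputable def fMACRatio (P₁ P₂ t : ℝ) : ℝ :=
  (P₁ + P₂) * (4 * P₁ * t - (t + P₁ - P₂) ^ 2) / (4 * P₁ * P₂ * t)

lemma fMACRatio_eq {P₁ P₂ t : ℝ} (hP₁ : 0 < P₁) (hP₂ : 0 < P₂) (ht : 0 < t) :
    fMACRatio P₁ P₂ t
      = 2 - t / (P₁ + P₂) - ((P₁ - P₂) * (t - (P₁ + P₂))) ^ 2 / (4 * P₁ * P₂ * t * (P₁ + P₂)) := by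
  rw [fMACRatio]
  field_simp
  ring

lemma fMACRatio_add_div_le {P₁ P₂ t : ℝ} (hP₁ : 0 < P₁) (hP₂ : 0 < P₂) (ht : 0 < t) :
    fMACRatio P₁ P₂ t + t / (P₁ + P₂) ≤ 2 := by
  rw [fMACRatio_eq hP₁ hP₂ ht]
  have : 0 ≤ ((P₁ - P₂) * (t - (P₁ + P₂))) ^ 2 / (4 * P₁ * P₂ * t * (P₁ + P₂)) := by positivity
  linarith

lemma fMACRatio_self_add {P₁ P₂ : ℝ} (hP₁ : 0 < P₁) (hP₂ : 0 < P₂) :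
    fMACRatio P₁ P₂ (P₁ + P₂) = 1 := by
  rw [fMACRatio_eq hP₁ hP₂ (by positivity), div_self (by positivity)]
  ring

lemma fMAC_eq_log_fMACRatio {P₁ P₂ t : ℝ} (hP₁ : 0 < P₁) (hP₂ : 0 < P₂) (ht : 0 < t)
    (hN : 0 < 4 * P₁ * t - (t + P₁ - P₂) ^ 2) :
    fMAC P₁ P₂ t = log (fMACRatio P₁ P₂ t) + t / (P₁ + P₂) - 1 := by
  have hsplit : fMACRatio P₁ P₂ t
      = (P₁ + P₂) / (exp 1 * P₂) * (1 - (t + P₁ - P₂) ^ 2 / (4 * P₁ * t)) * exp 1 := by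
    rw [fMACRatio]
    field_simp
  have harg : 0 < 1 - (t + P₁ - P₂) ^ 2 / (4 * P₁ * t) := by
    rw [one_sub_div (by positivity)]
    positivity
  rw [fMAC, hsplit, log_mul (by positivity) (exp_pos 1).ne', log_mul (by positivity) harg.ne',
    log_exp]
  ring

theorem fMAC_nonpos_and_eq_iff (P₁ P₂ t : ℝ) (hP₁ : 0 < P₁) (hP₂ : 0 < P₂)
    (ht : t ∈ Set.Ioo ((Real.sqrt P₁ - Real.sqrt P₂) ^ 2)
      ((Real.sqrt P₁ + Real.sqrt P₂) ^ 2)) :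
    fMAC P₁ P₂ t ≤ 0 ∧ (fMAC P₁ P₂ t = 0 ↔ t = P₁ + P₂) := by
  have ht₀ : 0 < t := (sq_nonneg _).trans_lt ht.1
  have hN := four_mul_mul_sub_sq_pos hP₁.le hP₂.le ht
  have hg : 0 < fMACRatio P₁ P₂ t := by rw [fMACRatio]; positivity
  have hle := fMACRatio_add_div_le hP₁ hP₂ ht₀
  rw [fMAC_eq_log_fMACRatio hP₁ hP₂ ht₀ hN]
  refine ⟨log_add_sub_one_nonpos hg hle, fun h ↦ ?_, fun h ↦ ?_⟩
  · exact (div_eq_one_iff_eq (by positivity)).1 (eq_one_of_log_add_sub_one_eq_zero hg hle h).2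
  · subst h
    rw [fMACRatio_self_add hP₁ hP₂, log_one, div_self (by positivity)]
    ring
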